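/- At every point x of the open set Ω_3 = (0,π)⁶ ∪ ((0,π)³ × (π,2π)³) ⊆ ℝ⁶, the Fréchet derivative of the map g_3 : ℝ⁶ → ℝ³ is surjective (has full rank 3); in particular 0 is a regular value of the restriction of g_3 to Ω_3. -/

import Mathlib

/-!
Component `j` of `gThree` depends on the angles only through the cosine of the `j`-th angle, so the
`3 × 3` block of the Jacobian in the angle directions is diagonal, with entries
`-sin b sin c sin α`, `-sin c sin a sin β`, `-sin a sin b sin γ`. On `Ω_3` the sides lie in `(0, π)`
and no angle is a multiple of `π`, so these entries are nonzero and the angle directions alone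
already span `ℝ³`.
-/

open Real

/-- The spherical law of cosines map `g_3 : ℝ⁶ → ℝ³`, with sides `(a,b,c) = (x 0, x 1, x 2)`
and angles `(α,β,γ) = (x 3, x 4, x 5)`. -/
noncomputable def gThree (x : Fin 6 → ℝ) : Fin 3 → ℝ :=
  ![Real.cos (x 1) * Real.cos (x 2) + Real.sin (x 1) * Real.sin (x 2) * Real.cos (x 3)
      - Real.cos (x 0),
    Real.cos (x 2) * Real.cos (x 0) + Real.sin (x 2) * Real.sin (x 0) * Real.cos (x 4)
      - Real.cos (x 1),
    Real.cos (x 0) * Real.cos (x 1) + Real.sin (x 0) * Real.sin (x 1) * Real.cos (x 5)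
      - Real.cos (x 2)]

theorem Real.sin_neg_of_pi_lt_of_lt_two_pi {t : ℝ} (h₁ : π < t) (h₂ : t < 2 * π) : sin t < 0 := by
  have : 0 < sin (t - π) := sin_pos_of_pos_of_lt_pi (by linarith) (by linarith)
  rw [sin_sub_pi] at this
  linarith

theorem LinearMap.surjective_of_apply_eq_single {K E ι : Type*} [Field K] [AddCommGroup E]
    [Module K E] [Fintype ι] [DecidableEq ι] (L : E →ₗ[K] ι → K) (v : ι → E) (d : ι → K)
    (hd : ∀ i, d i ≠ 0) (hL : ∀ i, L (v i) = Pi.single i (d i)) :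
    Function.Surjective L := by
  intro y
  refine ⟨∑ i, (y i / d i) • v i, ?_⟩
  simp only [map_sum, map_smul, hL, ← Pi.single_smul', smul_eq_mul, div_mul_cancel₀ _ (hd _),
    Finset.univ_sum_single]

namespace gThree

def side (i : Fin 3) : Fin 6 := Fin.castAdd 3 i

def angle (i : Fin 3) : Fin 6 := Fin.natAdd 3 i

@[simp] theorem side_ne_angle (i j : Fin 3) : side i ≠ angle j := by
  simp only [side, angle, ne_eq, Fin.ext_iff, Fin.val_castAdd, Fin.val_natAdd]
  omega

@[simp] theorem angle_inj {i j : Fin 3} : angle i = angle j ↔ i = j := Fin.natAdd_inj 3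

theorem apply_eq (x : Fin 6 → ℝ) (i : Fin 3) :
    gThree x i = cos (x (side (i + 1))) * cos (x (side (i + 2)))
      + sin (x (side (i + 1))) * sin (x (side (i + 2))) * cos (x (angle i))
      - cos (x (side i)) := by
  fin_cases i <;> rfl

noncomputable def angleCoeff (x : Fin 6 → ℝ) (j : Fin 3) : ℝ :=
  -(sin (x (side (j + 1))) * sin (x (side (j + 2))) * sin (x (angle j)))

theorem exists_hasFDerivAt_apply (x : Fin 6 → ℝ) (i : Fin 3) :
    ∃ D : (Fin 6 → ℝ) →L[ℝ] ℝ, HasFDerivAt (fun y => gThree y i) D x ∧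
      ∀ j, D (Pi.single (angle j) 1) = (Pi.single j (angleCoeff x j) : Fin 3 → ℝ) i := by
  have hcos (k : Fin 6) := (hasDerivAt_cos (x k)).comp_hasFDerivAt x
    (hasFDerivAt_apply (𝕜 := ℝ) (F' := fun _ => ℝ) k x)
  have hsin (k : Fin 6) := (hasDerivAt_sin (x k)).comp_hasFDerivAt x
    (hasFDerivAt_apply (𝕜 := ℝ) (F' := fun _ => ℝ) k x)
  simp only [apply_eq]
  refine ⟨_, (((hcos _).mul (hcos _)).add (((hsin _).mul (hsin _)).mul (hcos _))).sub (hcos _),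
    fun j => ?_⟩
  by_cases hij : i = j
  · subst hij
    simp [angleCoeff]
  · simp [hij]

theorem fderiv_single_angle (x : Fin 6 → ℝ) (j : Fin 3) :
    fderiv ℝ gThree x (Pi.single (angle j) 1) = Pi.single j (angleCoeff x j) := by
  choose D hD hD_angle using exists_hasFDerivAt_apply x
  have hG : HasFDerivAt gThree (ContinuousLinearMap.pi D) x := hasFDerivAt_pi.2 hD
  ext i
  simp only [hG.fderiv, ContinuousLinearMap.pi_apply, hD_angle]

theorem angleCoeff_ne_zero {x : Fin 6 → ℝ} (hside : ∀ k, x (side k) ∈ Set.Ioo 0 π)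
    (hangle : ∀ k, sin (x (angle k)) ≠ 0) (j : Fin 3) : angleCoeff x j ≠ 0 := by
  have hsin (k : Fin 3) : sin (x (side k)) ≠ 0 :=
    (sin_pos_of_pos_of_lt_pi (hside k).1 (hside k).2).ne'
  simpa [angleCoeff] using ⟨⟨hsin _, hsin _⟩, hangle j⟩

end gThree

/-- at every point of `Ω_3 = (0,π)⁶ ∪ ((0,π)³ × (π,2π)³)` the Fréchet
derivative of `g_3` is surjective (full rank 3); in particular `0` is a regular value
of the restriction of `g_3` to `Ω_3`. -/
theorem stmt_5 (x : Fin 6 → ℝ)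
    (hx : (∀ i, x i ∈ Set.Ioo 0 π) ∨
      ((x 0 ∈ Set.Ioo 0 π ∧ x 1 ∈ Set.Ioo 0 π ∧ x 2 ∈ Set.Ioo 0 π) ∧
        (x 3 ∈ Set.Ioo π (2 * π) ∧ x 4 ∈ Set.Ioo π (2 * π) ∧ x 5 ∈ Set.Ioo π (2 * π)))) :
    Function.Surjective ⇑(fderiv ℝ gThree x) := by
  obtain ⟨hside, hangle⟩ :
      (∀ k, x (gThree.side k) ∈ Set.Ioo 0 π) ∧ ∀ k, sin (x (gThree.angle k)) ≠ 0 := by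
    rcases hx with h | ⟨⟨h0, h1, h2⟩, h3, h4, h5⟩
    · exact ⟨fun k => h _, fun k => (sin_pos_of_pos_of_lt_pi (h _).1 (h _).2).ne'⟩
    · refine ⟨fun k => ?_, fun k => (sin_neg_of_pi_lt_of_lt_two_pi ?_ ?_).ne⟩ <;> fin_cases k
      exacts [h0, h1, h2, h3.1, h4.1, h5.1, h3.2, h4.2, h5.2]
  exact (fderiv ℝ gThree x).toLinearMap.surjective_of_apply_eq_single _ _
    (gThree.angleCoeff_ne_zero hside hangle) (gThree.fderiv_single_angle x)
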